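/- Suppose the gradient flow ∂ₜu = -p, p(t) ∈ ∂J(u(t)), u(0)=f, generates eigenvectors p(t) ∈ ∂J(p(t)) for all t > 0, and p(t) has minimal norm in ∂J(u(t)). Then for all 0 < r ≤ s ≤ t: ⟨p(t), p(s) - p(r)⟩ = 0. Consequently, the spectral increments φ(s₁,t₁)=p(t₁)-p(s₁) and φ(s₂,t₂)=p(t₂)-p(s₂) are orthogonal whenever 0 < s₁ ≤ t₁ ≤ s₂ ≤ t₂, and moreover p(s) ∈ ∂J(p(t)) for all 0 < s ≤ t. -/

import Mathlib

/-- The class `𝒞` of convex, lower semicontinuous, absolutely one-homogeneous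
functionals `J : H → ℝ ∪ {+∞}` on a real Hilbert space. -/
def IsAbsOneHom {H : Type*} [NormedAddCommGroup H] [InnerProductSpace ℝ H]
    (J : H → EReal) : Prop :=
  (∀ u v : H, ∀ a b : ℝ, 0 ≤ a → 0 ≤ b → a + b = 1 →
      J (a • u + b • v) ≤ (a : EReal) * J u + (b : EReal) * J v) ∧
  LowerSemicontinuous J ∧
  (∀ c : ℝ, c ≠ 0 → ∀ u : H, J (c • u) = ((|c| : ℝ) : EReal) * J u) ∧
  J 0 = 0

/-- Subdifferential of `J` at `u`:
`∂J(u) = {p ∈ H : ⟨p,v⟩ ≤ J(v) ∀ v, ⟨p,u⟩ = J(u)}`. -/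
def subdiff {H : Type*} [NormedAddCommGroup H] [InnerProductSpace ℝ H]
    (J : H → EReal) (u : H) : Set H :=
  {p : H | (∀ v : H, ((inner ℝ p v : ℝ) : EReal) ≤ J v) ∧ ((inner ℝ p u : ℝ) : EReal) = J u}

/-!
The subdifferential `∂J(u)` is convex, so its minimal-norm element `p` satisfies the
variational inequality `⟨p, q - p⟩ ≥ 0` for every `q ∈ ∂J(u)`. If moreover `p ∈ ∂J(p)`, then
`⟨q, p⟩ ≤ J(p) = ⟨p, p⟩`, hence `⟨p, q⟩ = ‖p‖²` for all `q ∈ ∂J(u)`. Along the flow, `p(r)` and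
`p(s)` both lie in `∂J(u(t))` for `r ≤ s ≤ t`, so `p(t)` pairs equally with both of them.
-/

open Set

section

variable {H : Type*} [NormedAddCommGroup H] [InnerProductSpace ℝ H]

theorem convex_setOf_inner_coe_mem (v : H) {S : Set EReal} (hS : S.OrdConnected) :
    Convex ℝ {p : H | ((inner ℝ p v : ℝ) : EReal) ∈ S} := by
  have hpre : {p : H | ((inner ℝ p v : ℝ) : EReal) ∈ S} =
      innerSL ℝ v ⁻¹' (((↑) : ℝ → EReal) ⁻¹' S) := by
    ext p; simp [real_inner_comm]
  rw [hpre]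
  exact (hS.preimage_mono EReal.coe_strictMono.monotone).convex.linear_preimage
    (innerSL ℝ v).toLinearMap

theorem convex_subdiff (J : H → EReal) (u : H) : Convex ℝ (subdiff J u) := by
  have hsubdiff : subdiff J u = (⋂ v, {p : H | ((inner ℝ p v : ℝ) : EReal) ∈ Iic (J v)}) ∩
      {p : H | ((inner ℝ p u : ℝ) : EReal) ∈ ({J u} : Set EReal)} := by
    ext p; simp [subdiff]
  rw [hsubdiff]
  exact (convex_iInter fun v => convex_setOf_inner_coe_mem v ordConnected_Iic).inter
    (convex_setOf_inner_coe_mem u ordConnected_singleton)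

theorem real_inner_sub_nonneg_of_forall_norm_le {K : Set H} (hK : Convex ℝ K) {p q : H}
    (hp : p ∈ K) (hmin : ∀ w ∈ K, ‖p‖ ≤ ‖w‖) (hq : q ∈ K) : 0 ≤ inner ℝ p (q - p) := by
  have : Nonempty K := ⟨⟨p, hp⟩⟩
  have hinf : ‖0 - p‖ = ⨅ w : K, ‖0 - (w : H)‖ := by
    simp only [zero_sub, norm_neg]
    exact le_antisymm (le_ciInf fun w => hmin w w.2)
      (ciInf_le ⟨0, by rintro _ ⟨w, rfl⟩; positivity⟩ (⟨p, hp⟩ : K))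
  have hvar := (norm_eq_iInf_iff_real_inner_le_zero hK hp).1 hinf q hq
  rw [zero_sub, inner_neg_left] at hvar
  linarith

theorem real_inner_le_of_mem_subdiff_self {J : H → EReal} {p q w : H}
    (hp : p ∈ subdiff J p) (hq : q ∈ subdiff J w) : inner ℝ q p ≤ inner ℝ p p :=
  EReal.coe_le_coe_iff.1 (hp.2 ▸ hq.1 p)

theorem real_inner_eq_of_mem_subdiff_of_forall_norm_le {J : H → EReal} {p q u : H}
    (heig : p ∈ subdiff J p) (hp : p ∈ subdiff J u) (hmin : ∀ w ∈ subdiff J u, ‖p‖ ≤ ‖w‖)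
    (hq : q ∈ subdiff J u) : inner ℝ p q = inner ℝ p p := by
  have hle : inner ℝ p q ≤ inner ℝ p p :=
    real_inner_comm p q ▸ real_inner_le_of_mem_subdiff_self heig hq
  have hge := real_inner_sub_nonneg_of_forall_norm_le (convex_subdiff J u) hp hmin hq
  rw [inner_sub_right] at hge
  linarith

end

theorem orthogonality_of_spectral_increments_general {H : Type*} [NormedAddCommGroup H]
    [InnerProductSpace ℝ H]
    (J : H → EReal)
    (u p : ℝ → H)
    (hsub : ∀ t : ℝ, 0 < t → p t ∈ subdiff J (u t))
    (hmin : ∀ t : ℝ, 0 < t → ∀ q ∈ subdiff J (u t), ‖p t‖ ≤ ‖q‖)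
    (heig : ∀ t : ℝ, 0 < t → p t ∈ subdiff J (p t))
    (hprev : ∀ s t : ℝ, 0 < s → s ≤ t → p s ∈ subdiff J (u t)) :
    (∀ r s t : ℝ, 0 < r → r ≤ s → s ≤ t → (inner ℝ (p t) (p s - p r) : ℝ) = 0) ∧
    (∀ s₁ t₁ s₂ t₂ : ℝ, 0 < s₁ → s₁ ≤ t₁ → t₁ ≤ s₂ → s₂ ≤ t₂ →
      (inner ℝ (p t₁ - p s₁) (p t₂ - p s₂) : ℝ) = 0) ∧
    (∀ s t : ℝ, 0 < s → s ≤ t → p s ∈ subdiff J (p t)) := by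
  have hpair : ∀ s t : ℝ, 0 < s → s ≤ t → inner ℝ (p t) (p s) = inner ℝ (p t) (p t) :=
    fun s t hs hst => real_inner_eq_of_mem_subdiff_of_forall_norm_le (heig t (hs.trans_le hst))
      (hsub t (hs.trans_le hst)) (hmin t (hs.trans_le hst)) (hprev s t hs hst)
  have hperp : ∀ r s t : ℝ, 0 < r → r ≤ s → s ≤ t → inner ℝ (p t) (p s - p r) = 0 :=
    fun r s t hr hrs hst => by
      rw [inner_sub_right, hpair s t (hr.trans_le hrs) hst, hpair r t hr (hrs.trans hst),
        sub_self]
  refine ⟨hperp, fun s₁ t₁ s₂ t₂ hs₁ h₁ h₂ h₃ => ?_, fun s t hs hst => ?_⟩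
  · rw [inner_sub_right, real_inner_comm (p t₂), real_inner_comm (p s₂),
      hperp s₁ t₁ t₂ hs₁ h₁ (h₂.trans h₃), hperp s₁ t₁ s₂ hs₁ h₁ h₂, sub_self]
  · refine ⟨(hprev s t hs hst).1, ?_⟩
    rw [real_inner_comm, hpair s t hs hst]
    exact (heig t (hs.trans_le hst)).2

theorem orthogonality_of_spectral_increments {H : Type*} [NormedAddCommGroup H]
    [InnerProductSpace ℝ H] [CompleteSpace H]
    (J : H → EReal) (hJ : IsAbsOneHom J)
    (u p : ℝ → H) (f : H) (hu0 : u 0 = f)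
    (hflow : ∀ t : ℝ, 0 < t → HasDerivWithinAt u (-(p t)) (Set.Ici t) t)
    (hsub : ∀ t : ℝ, 0 < t → p t ∈ subdiff J (u t))
    (hmin : ∀ t : ℝ, 0 < t → ∀ q ∈ subdiff J (u t), ‖p t‖ ≤ ‖q‖)
    (heig : ∀ t : ℝ, 0 < t → p t ∈ subdiff J (p t))
    (hprev : ∀ s t : ℝ, 0 < s → s ≤ t → p s ∈ subdiff J (u t)) :
    (∀ r s t : ℝ, 0 < r → r ≤ s → s ≤ t → (inner ℝ (p t) (p s - p r) : ℝ) = 0) ∧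
    (∀ s₁ t₁ s₂ t₂ : ℝ, 0 < s₁ → s₁ ≤ t₁ → t₁ ≤ s₂ → s₂ ≤ t₂ →
      (inner ℝ (p t₁ - p s₁) (p t₂ - p s₂) : ℝ) = 0) ∧
    (∀ s t : ℝ, 0 < s → s ≤ t → p s ∈ subdiff J (p t)) :=
  orthogonality_of_spectral_increments_general J u p hsub hmin heig hprev
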